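/- arXiv:2211.14137 — 4 statements merged into one kernel-verified Lean document; each statement's English description precedes it below -/
import Mathlib

section
/- Let n ≥ 1, let σ ∈ E₊ and let c be a real number. Then the endomorphism P(σ) − c·(σ⊗σ) of E is invertible if and only if c ≠ 1/n, and in that case its inverse is P(σ⁻¹) + (c/(1−nc))·(σ⁻¹⊗σ⁻¹). -/
open MeasureTheory Matrix Real

noncomputable section

/-- Square real matrices of size `n`. -/
abbrev Mat (n : ℕ) : Type := Matrix (Fin n) (Fin n) ℝ

/-- The submodule of symmetric `n × n` real matrices. -/
def symSubmodule (n : ℕ) : Submodule ℝ (Mat n) where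
  carrier := {A | A.IsSymm}
  add_mem' := fun {a b} (ha : aᵀ = a) (hb : bᵀ = b) => by
    show (a + b)ᵀ = a + b
    rw [Matrix.transpose_add, ha, hb]
  zero_mem' := Matrix.isSymm_zero
  smul_mem' := fun c a (ha : aᵀ = a) => by
    show (c • a)ᵀ = c • a
    rw [Matrix.transpose_smul, ha]

/-- The space `E` of symmetric `n × n` real matrices. -/
abbrev SymMat (n : ℕ) : Type := ↥(symSubmodule n)

lemma symMat_isSymm {n : ℕ} (u : SymMat n) : (u : Mat n).IsSymm := u.2

/-- The endomorphism `P(a) : v ↦ a v a` of the space `E` of symmetric matrices. -/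
def Pmap {n : ℕ} (a : SymMat n) : Module.End ℝ (SymMat n) where
  toFun v := ⟨(a : Mat n) * (v : Mat n) * (a : Mat n), by
    show ((a : Mat n) * (v : Mat n) * (a : Mat n))ᵀ = (a : Mat n) * (v : Mat n) * (a : Mat n)
    have ha : (a : Mat n)ᵀ = (a : Mat n) := a.2
    have hv : (v : Mat n)ᵀ = (v : Mat n) := v.2
    rw [Matrix.transpose_mul, Matrix.transpose_mul, ha, hv, ← Matrix.mul_assoc]⟩
  map_add' u v := by
    apply Subtype.ext
    simp [Matrix.mul_add, Matrix.add_mul]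
  map_smul' c v := by
    apply Subtype.ext
    simp [Matrix.mul_smul, Matrix.smul_mul]

/-- The endomorphism `a ⊗ a : v ↦ tr (a v) • a` of the space `E` of symmetric matrices. -/
def tensMap {n : ℕ} (a : SymMat n) : Module.End ℝ (SymMat n) where
  toFun v := ((a : Mat n) * (v : Mat n)).trace • a
  map_add' u v := by
    simp [Matrix.mul_add, add_smul]
  map_smul' c v := by
    simp [Matrix.mul_smul, smul_smul]

/-- The inverse of a symmetric matrix, as a symmetric matrix. -/
def symInv {n : ℕ} (a : SymMat n) : SymMat n :=
  ⟨(a : Mat n)⁻¹, by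
    show ((a : Mat n)⁻¹)ᵀ = (a : Mat n)⁻¹
    have ha : (a : Mat n)ᵀ = (a : Mat n) := a.2
    rw [Matrix.transpose_nonsing_inv, ha]⟩

/-! If `a b = 1`, then `P(a) P(b) = 1`, `P(a) (b ⊗ b) = (a ⊗ a) P(b)` and
`(a ⊗ a) (b ⊗ b) = n (a ⊗ a) P(b)`, so
`(P(a) + c a ⊗ a) (P(b) + d b ⊗ b) = 1 + (c + d + c d n) (a ⊗ a) P(b)`.
With `a = σ`, `b = σ⁻¹` and `c ↦ -c`, the choice `d = c / (1 - n c)` kills the last term on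
either side. When `c = 1/n`, instead, `P(σ) - c σ ⊗ σ` sends `σ⁻¹ ≠ 0` to `(1 - n c) σ = 0`. -/

section Inverse

variable {n : ℕ} {a b : SymMat n}

lemma Pmap_mul_Pmap_of_mul_eq_one (h : (a : Mat n) * b = 1) : Pmap a * Pmap b = 1 := by
  have h' : (b : Mat n) * a = 1 := mul_eq_one_comm.mp h
  ext1 v
  apply Subtype.ext
  change (a : Mat n) * (b * v * b) * a = v
  simp only [← Matrix.mul_assoc, h, Matrix.one_mul]
  rw [Matrix.mul_assoc, h', Matrix.mul_one]

lemma Pmap_mul_tensMap_of_mul_eq_one (h : (a : Mat n) * b = 1) :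
    Pmap a * tensMap b = tensMap a * Pmap b := by
  ext1 v
  apply Subtype.ext
  change (a : Mat n) * (((b : Mat n) * v).trace • (b : Mat n)) * a
    = ((a : Mat n) * (b * v * b)).trace • (a : Mat n)
  rw [Matrix.mul_smul, Matrix.smul_mul, h, Matrix.one_mul, ← Matrix.mul_assoc,
    ← Matrix.mul_assoc, h, Matrix.one_mul, Matrix.trace_mul_comm]

lemma tensMap_mul_tensMap_of_mul_eq_one (h : (a : Mat n) * b = 1) :
    tensMap a * tensMap b = (n : ℝ) • (tensMap a * Pmap b) := by
  rw [← Pmap_mul_tensMap_of_mul_eq_one h]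
  ext1 v
  apply Subtype.ext
  change ((a : Mat n) * (((b : Mat n) * v).trace • (b : Mat n))).trace • (a : Mat n)
    = (n : ℝ) • ((a : Mat n) * (((b : Mat n) * v).trace • (b : Mat n)) * a)
  rw [Matrix.mul_smul, Matrix.smul_mul, h, Matrix.one_mul, Matrix.trace_smul, Matrix.trace_one,
    Fintype.card_fin]
  module

theorem Pmap_add_smul_tensMap_mul_of_mul_eq_one (h : (a : Mat n) * b = 1) {c d : ℝ}
    (hcd : c + d + c * d * n = 0) :
    (Pmap a + c • tensMap a) * (Pmap b + d • tensMap b) = 1 := by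
  have expand : (Pmap a + c • tensMap a) * (Pmap b + d • tensMap b)
      = Pmap a * Pmap b + (c + d + c * d * n) • (tensMap a * Pmap b) := by
    simp only [mul_add, add_mul, mul_smul_comm, smul_mul_assoc, smul_smul, add_smul,
      Pmap_mul_tensMap_of_mul_eq_one h, tensMap_mul_tensMap_of_mul_eq_one h]
    module
  rw [expand, hcd, zero_smul, add_zero, Pmap_mul_Pmap_of_mul_eq_one h]

lemma Pmap_add_smul_tensMap_apply_of_mul_eq_one (h : (a : Mat n) * b = 1) (c : ℝ) :
    (Pmap a + c • tensMap a) b = (1 + c * n) • a := by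
  apply Subtype.ext
  change (a : Mat n) * b * a + c • (((a : Mat n) * b).trace • (a : Mat n))
    = (1 + c * n) • (a : Mat n)
  rw [h, Matrix.one_mul, Matrix.trace_one, Fintype.card_fin, smul_smul, add_smul, one_smul]

lemma not_isUnit_Pmap_add_smul_tensMap [NeZero n] (h : (a : Mat n) * b = 1) {c : ℝ}
    (hc : 1 + c * n = 0) : ¬IsUnit (Pmap a + c • tensMap a) := by
  intro hu
  have hb : b ≠ 0 := by
    rintro rfl
    exact one_ne_zero (h ▸ Matrix.mul_zero (a : Mat n))
  apply hb
  apply (Module.End.isUnit_iff _).mp hu |>.injective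
  rw [Pmap_add_smul_tensMap_apply_of_mul_eq_one h, hc, zero_smul, map_zero]

end Inverse

/-- Lemma 3.2, part 1: `P(σ) - c σ ⊗ σ` is invertible iff `c ≠ 1/n`, and in that case its
inverse is `P(σ⁻¹) + (c/(1-nc)) σ⁻¹ ⊗ σ⁻¹`. -/
theorem stmt_10 (n : ℕ) (hn : 1 ≤ n) (σ : SymMat n) (hσ : (σ : Mat n).PosDef) (c : ℝ) :
    (IsUnit (Pmap σ - c • tensMap σ) ↔ c ≠ 1 / (n : ℝ)) ∧
      (c ≠ 1 / (n : ℝ) →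
        (Pmap σ - c • tensMap σ) *
            (Pmap (symInv σ) + (c / (1 - (n : ℝ) * c)) • tensMap (symInv σ)) = 1 ∧
          (Pmap (symInv σ) + (c / (1 - (n : ℝ) * c)) • tensMap (symInv σ)) *
            (Pmap σ - c • tensMap σ) = 1) := by
  have : NeZero n := ⟨by omega⟩
  have hn0 : (n : ℝ) ≠ 0 := NeZero.ne _
  have hσσ' : (σ : Mat n) * (symInv σ : Mat n) = 1 :=
    Matrix.mul_nonsing_inv _ (isUnit_iff_ne_zero.mpr hσ.det_pos.ne')
  have hσ'σ := mul_eq_one_comm.mp hσσ'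
  have hc_iff : c ≠ 1 / (n : ℝ) ↔ 1 - n * c ≠ 0 := by
    rw [not_iff_not, sub_eq_zero, eq_div_iff hn0, mul_comm, eq_comm]
  have hneg : Pmap σ - c • tensMap σ = Pmap σ + (-c) • tensMap σ := by module
  rw [hneg, hc_iff]
  have inverse (hc : 1 - n * c ≠ 0) :
      (Pmap σ + (-c) • tensMap σ) *
          (Pmap (symInv σ) + (c / (1 - n * c)) • tensMap (symInv σ)) = 1 ∧
        (Pmap (symInv σ) + (c / (1 - n * c)) • tensMap (symInv σ)) *
          (Pmap σ + (-c) • tensMap σ) = 1 :=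
    ⟨Pmap_add_smul_tensMap_mul_of_mul_eq_one hσσ' (by linear_combination div_mul_cancel₀ c hc),
      Pmap_add_smul_tensMap_mul_of_mul_eq_one hσ'σ (by linear_combination div_mul_cancel₀ c hc)⟩
  refine ⟨⟨fun hu hc => ?_, fun hc => ⟨⟨_, _, (inverse hc).1, (inverse hc).2⟩, rfl⟩⟩, inverse⟩
  exact not_isUnit_Pmap_add_smul_tensMap hσσ' (by linear_combination hc) hu
end
end

section
/- Let n ≥ 1, let σ ∈ E₊ and let c be a real number. Then the symmetric endomorphism P(σ) − c·(σ⊗σ) of E is positive definite (i.e. ⟨(P(σ) − c·σ⊗σ)(v), v⟩ > 0 for all nonzero v ∈ E) if and only if c < 1/n. -/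
open MeasureTheory Matrix Real

noncomputable section

/-! Write `σ = Bᵀ B`. The congruence `v ↦ w = B v Bᵀ` turns the quadratic form
`tr (σ v σ v) - c tr (σ v)²` into `tr (w²) - c (tr w)²`, and Cauchy–Schwarz on the diagonal gives
`(tr w)² ≤ n tr (w²)` with `tr (w²) > 0` for `w ≠ 0`; so the form is positive when `c n < 1`.
Conversely, at `v = σ⁻¹` the form equals `n - c n²`. -/

namespace Matrix

variable {ι : Type*} [Fintype ι]

section Congruence

variable {R : Type*} [CommSemiring R]

lemma IsSymm.mul_mul_transpose {v : Matrix ι ι R} (hv : v.IsSymm) (B : Matrix ι ι R) :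
    (B * v * Bᵀ).IsSymm := by
  simp only [IsSymm, transpose_mul, transpose_transpose, hv.eq, Matrix.mul_assoc]

lemma trace_mul_mul_transpose (B v : Matrix ι ι R) : (B * v * Bᵀ).trace = (Bᵀ * B * v).trace := by
  rw [trace_mul_comm, Matrix.mul_assoc]

lemma trace_mul_mul_transpose_mul_self (B v : Matrix ι ι R) :
    (B * v * Bᵀ * (B * v * Bᵀ)).trace = (Bᵀ * B * v * (Bᵀ * B) * v).trace := by
  rw [show B * v * Bᵀ * (B * v * Bᵀ) = B * v * Bᵀ * B * v * Bᵀ by simp only [Matrix.mul_assoc],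
    trace_mul_comm]
  simp only [Matrix.mul_assoc]

end Congruence

variable {w : Matrix ι ι ℝ}

lemma IsSymm.trace_mul_self (hw : w.IsSymm) : (w * w).trace = ∑ i, ∑ j, w i j ^ 2 := by
  simp only [trace, diag, mul_apply, sq]
  exact Finset.sum_congr rfl fun i _ => Finset.sum_congr rfl fun j _ => by rw [hw.apply i j]

lemma IsSymm.trace_mul_self_pos (hw : w.IsSymm) (h0 : w ≠ 0) : 0 < (w * w).trace := by
  have hnonneg : 0 ≤ (w * w).trace := by
    rw [hw.trace_mul_self]
    positivity
  have hne : (wᴴ * w).trace ≠ 0 := mt trace_conjTranspose_mul_self_eq_zero_iff.mp h0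
  rw [conjTranspose_eq_transpose_of_trivial, hw.eq] at hne
  exact hnonneg.lt_of_ne' hne

lemma IsSymm.trace_sq_le_card_mul_trace_mul_self (hw : w.IsSymm) :
    w.trace ^ 2 ≤ Fintype.card ι * (w * w).trace := by
  have hdiag : ∑ i, w i i ^ 2 ≤ (w * w).trace := by
    rw [hw.trace_mul_self]
    exact Finset.sum_le_sum fun i _ =>
      Finset.single_le_sum (fun j _ => sq_nonneg (w i j)) (Finset.mem_univ i)
  calc w.trace ^ 2 ≤ Fintype.card ι * ∑ i, w i i ^ 2 := sq_sum_le_card_mul_sum_sq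
    _ ≤ Fintype.card ι * (w * w).trace := by gcongr

lemma IsSymm.mul_trace_sq_lt_trace_mul_self (hw : w.IsSymm) (h0 : w ≠ 0) {c : ℝ}
    (hc : c * Fintype.card ι < 1) : c * w.trace ^ 2 < (w * w).trace := by
  have hpos := hw.trace_mul_self_pos h0
  have hCS := hw.trace_sq_le_card_mul_trace_mul_self
  rcases le_or_gt c 0 with hc0 | hc0
  · nlinarith [sq_nonneg w.trace]
  · nlinarith

end Matrix

lemma trace_Pmap_sub_smul_tensMap_apply_mul {n : ℕ} (σ v : SymMat n) (c : ℝ) :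
    ((((Pmap σ - c • tensMap σ) v : SymMat n) : Mat n) * (v : Mat n)).trace
      = ((σ : Mat n) * v * σ * v).trace - c * ((σ : Mat n) * v).trace ^ 2 := by
  simp only [LinearMap.sub_apply, LinearMap.smul_apply, Pmap, tensMap, LinearMap.coe_mk,
    AddHom.coe_mk, AddSubgroupClass.coe_sub, SetLike.val_smul, Matrix.sub_mul, Matrix.smul_mul,
    Matrix.trace_sub, Matrix.trace_smul, smul_eq_mul]
  ring

lemma trace_Pmap_sub_smul_tensMap_symInv_mul {n : ℕ} {σ : SymMat n} (hσ : IsUnit (σ : Mat n))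
    (c : ℝ) :
    ((((Pmap σ - c • tensMap σ) (symInv σ) : SymMat n) : Mat n) * (symInv σ : Mat n)).trace
      = n - c * n ^ 2 := by
  have hinv : (σ : Mat n) * (σ : Mat n)⁻¹ = 1 :=
    Matrix.mul_nonsing_inv _ ((σ : Mat n).isUnit_iff_isUnit_det.mp hσ)
  rw [trace_Pmap_sub_smul_tensMap_apply_mul]
  change ((σ : Mat n) * (σ : Mat n)⁻¹ * σ * (σ : Mat n)⁻¹).trace
    - c * ((σ : Mat n) * (σ : Mat n)⁻¹).trace ^ 2 = _
  rw [hinv, Matrix.one_mul, hinv, Matrix.trace_one, Fintype.card_fin]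

lemma symInv_ne_zero {n : ℕ} (hn : 1 ≤ n) {σ : SymMat n} (hσ : IsUnit (σ : Mat n)) :
    symInv σ ≠ 0 := by
  have : Nonempty (Fin n) := ⟨⟨0, hn⟩⟩
  intro h
  have h0 : (σ : Mat n)⁻¹ = 0 := congrArg Subtype.val h
  simpa [h0] using Matrix.mul_nonsing_inv _ ((σ : Mat n).isUnit_iff_isUnit_det.mp hσ)

open scoped MatrixOrder in
lemma trace_Pmap_sub_smul_tensMap_apply_mul_pos {n : ℕ} {σ : SymMat n} (hσ : (σ : Mat n).PosDef)
    {c : ℝ} (hc : c * n < 1) {v : SymMat n} (hv : v ≠ 0) :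
    0 < ((((Pmap σ - c • tensMap σ) v : SymMat n) : Mat n) * (v : Mat n)).trace := by
  obtain ⟨B, hB⟩ := CStarAlgebra.nonneg_iff_eq_star_mul_self.mp hσ.posSemidef.nonneg
  rw [star_eq_conjTranspose, conjTranspose_eq_transpose_of_trivial] at hB
  set w := B * (v : Mat n) * Bᵀ
  have hw0 : w ≠ 0 := by
    intro h0
    have hσvσ : (σ : Mat n) * v * σ = 0 := by
      rw [hB, show Bᵀ * B * v * (Bᵀ * B) = Bᵀ * w * B by simp only [w, Matrix.mul_assoc], h0,
        Matrix.mul_zero, Matrix.zero_mul]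
    rw [hσ.isUnit.mul_left_eq_zero, hσ.isUnit.mul_right_eq_zero] at hσvσ
    exact hv (Subtype.ext hσvσ)
  have key := (v.2.mul_mul_transpose B).mul_trace_sq_lt_trace_mul_self hw0
    (by rwa [Fintype.card_fin])
  rw [trace_Pmap_sub_smul_tensMap_apply_mul, hB, ← Matrix.trace_mul_mul_transpose,
    ← Matrix.trace_mul_mul_transpose_mul_self]
  linarith

/-- Lemma 3.2, part 2: `P(σ) - c σ ⊗ σ` is positive definite for the inner product
`⟨u, v⟩ = tr (u v)` iff `c < 1/n`. -/
theorem stmt_11 (n : ℕ) (hn : 1 ≤ n) (σ : SymMat n) (hσ : (σ : Mat n).PosDef) (c : ℝ) :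
    (∀ v : SymMat n, v ≠ 0 →
        0 < ((((Pmap σ - c • tensMap σ) v : SymMat n) : Mat n) * (v : Mat n)).trace) ↔
      c < 1 / (n : ℝ) := by
  have hn' : (0 : ℝ) < n := by exact_mod_cast hn
  rw [lt_div_iff₀ hn']
  constructor
  · intro h
    have hinv := h (symInv σ) (symInv_ne_zero hn hσ.isUnit)
    rw [trace_Pmap_sub_smul_tensMap_symInv_mul hσ.isUnit] at hinv
    nlinarith
  · exact fun hc v hv => trace_Pmap_sub_smul_tensMap_apply_mul_pos hσ hc hv

end
end

section
/- Let n ≥ 1, let σ ∈ E₊ and let c be a real number. Then the determinant of the endomorphism P(σ) − c·(σ⊗σ) of the n(n+1)/2-dimensional space E equals (det σ)^{n+1} · (1 − cn). In particular det P(σ) = (det σ)^{n+1}. -/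
/-!
Write `σ ⊗ σ = P(σ) ∘ (σ⁻¹ ⊗' σ)` with the rank-one map `v ↦ tr(σ v) σ⁻¹`, so that
`P(σ) - c σ ⊗ σ = P(σ) ∘ (1 - c σ⁻¹ ⊗' σ)` and the rank-one determinant formula contributes
`1 - c tr(σ σ⁻¹) = 1 - c n`. For `det P(σ)`, diagonalise `σ = U D Uᵀ` with `U` orthogonal:
`P(σ)` is conjugate to `P(D)` by `v ↦ U v Uᵀ`, and `P(D)` scales the matrix unit at `(i, j)`,
`i ≤ j`, by `dᵢ dⱼ`, giving `∏_{i ≤ j} dᵢ dⱼ = (∏ dᵢ)^(n+1)`.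
-/

open MeasureTheory Matrix Real

noncomputable section

theorem LinearMap.det_one_add_smulRight {R M : Type*} [CommRing R] [AddCommGroup M] [Module R M]
    [Module.Free R M] [Module.Finite R M] (f : M →ₗ[R] R) (x : M) :
    LinearMap.det (1 + f.smulRight x) = 1 + f x := by
  let b := Module.Free.chooseBasis R M
  have hrank : LinearMap.toMatrix b b (f.smulRight x) =
      replicateCol Unit (b.repr x) * replicateRow Unit (fun i => f (b i)) := by
    ext i j
    simp [LinearMap.toMatrix_apply, Matrix.mul_apply, mul_comm]
  rw [← LinearMap.det_toMatrix b, map_add, LinearMap.toMatrix_one, hrank,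
    det_one_add_replicateCol_mul_replicateRow]
  conv_rhs => rw [← b.sum_repr x]
  simp only [dotProduct, map_sum, map_smul, smul_eq_mul, mul_comm]

section

variable {n : ℕ}

@[simp] lemma coe_Pmap_apply (a v : SymMat n) : (Pmap a v : Mat n) = a * v * a := rfl

def traceForm (a : SymMat n) : SymMat n →ₗ[ℝ] ℝ where
  toFun v := ((a : Mat n) * v).trace
  map_add' u v := by simp [Matrix.mul_add]
  map_smul' c v := by simp

lemma tensMap_eq_smulRight (a : SymMat n) : tensMap a = (traceForm a).smulRight a := rfl

lemma traceForm_symInv {σ : SymMat n} (hσ : IsUnit (σ : Mat n).det) :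
    traceForm σ (symInv σ) = n := by
  simp [traceForm, symInv, mul_nonsing_inv _ hσ]

lemma Pmap_mul_smulRight_symInv {σ : SymMat n} (hσ : IsUnit (σ : Mat n).det) :
    Pmap σ * (traceForm σ).smulRight (symInv σ) = tensMap σ := by
  ext v : 2
  simp [tensMap_eq_smulRight, symInv, Matrix.mul_assoc, nonsing_inv_mul _ hσ]

lemma Pmap_sub_smul_tensMap_eq_mul {σ : SymMat n} (hσ : IsUnit (σ : Mat n).det) (c : ℝ) :
    Pmap σ - c • tensMap σ = Pmap σ * (1 + (-c • traceForm σ).smulRight (symInv σ)) := by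
  have hsmul : (-c • traceForm σ).smulRight (symInv σ) = -c • (traceForm σ).smulRight (symInv σ) :=
    LinearMap.ext fun v => mul_smul _ _ _
  rw [mul_add, mul_one, hsmul, mul_smul_comm, Pmap_mul_smulRight_symInv hσ]
  module

def congrHom (n : ℕ) : Mat n →* Module.End ℝ (SymMat n) where
  toFun g :=
    { toFun v := ⟨g * v * gᵀ, by
        show (g * (v : Mat n) * gᵀ)ᵀ = g * v * gᵀ
        rw [transpose_mul, transpose_mul, transpose_transpose, (symMat_isSymm v).eq,
          Matrix.mul_assoc]⟩
      map_add' u v := Subtype.ext (by simp [Matrix.mul_add, Matrix.add_mul])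
      map_smul' c v := Subtype.ext (by simp) }
  map_one' := LinearMap.ext fun v => Subtype.ext (by simp)
  map_mul' g h := LinearMap.ext fun v => Subtype.ext (by simp [transpose_mul, Matrix.mul_assoc])

@[simp] lemma coe_congrHom_apply (g : Mat n) (v : SymMat n) :
    (congrHom n g v : Mat n) = g * v * gᵀ := rfl

lemma Pmap_congrHom (g : Mat n) (a : SymMat n) :
    Pmap (congrHom n g a) = congrHom n g * Pmap a * congrHom n gᵀ :=
  LinearMap.ext fun v => Subtype.ext (by simp [Matrix.mul_assoc])

lemma det_Pmap_congrHom_of_mul_transpose {U : Mat n} (hU : U * Uᵀ = 1) (a : SymMat n) :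
    LinearMap.det (Pmap (congrHom n U a)) = LinearMap.det (Pmap a) := by
  have h : LinearMap.det (congrHom n U) * LinearMap.det (congrHom n Uᵀ) = 1 := by
    rw [← map_mul, ← map_mul, hU, map_one, map_one]
  rw [Pmap_congrHom, map_mul, map_mul]
  linear_combination LinearMap.det (Pmap a) * h

abbrev UpperPairs (n : ℕ) := {p : Fin n × Fin n // p.1 ≤ p.2}

def symCoords (n : ℕ) : SymMat n ≃ₗ[ℝ] (UpperPairs n → ℝ) where
  toFun u p := (u : Mat n) p.1.1 p.1.2
  map_add' u v := rfl
  map_smul' c u := rfl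
  invFun f := ⟨Matrix.of fun k l =>
      if h : k ≤ l then f ⟨(k, l), h⟩ else f ⟨(l, k), (not_le.1 h).le⟩, by
    ext k l
    rcases lt_trichotomy k l with h | rfl | h
    · simp [h.le, not_le.2 h]
    · rfl
    · simp [h.le, not_le.2 h]⟩
  left_inv u := by
    ext k l
    by_cases h : k ≤ l
    · simp [h]
    · simp [(symMat_isSymm u).apply]
  right_inv f := funext fun p => by simp [p.2]

@[simp] lemma symCoords_apply (u : SymMat n) (p : UpperPairs n) :
    symCoords n u p = (u : Mat n) p.1.1 p.1.2 := rfl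

lemma symCoords_symm_apply_of_le (f : UpperPairs n → ℝ) (p : UpperPairs n) :
    ((symCoords n).symm f : Mat n) p.1.1 p.1.2 = f p := by
  simp [symCoords, p.2]

lemma Fin.prod_upperPairs_mul {M : Type*} [CommMonoid M] (g : Fin n → M) :
    ∏ p : UpperPairs n, g p.1.1 * g p.1.2 = (∏ i, g i) ^ (n + 1) := by
  -- `g i` is the smaller entry of `n - i` pairs and the larger entry of `i + 1` pairs.
  have hsplit (i j : Fin n) : (if i ≤ j then g i * g j else 1) =
      (if i ≤ j then g i else 1) * (if i ≤ j then g j else 1) := by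
    split_ifs <;> simp
  rw [← Finset.prod_subtype ({p | p.1 ≤ p.2} : Finset (Fin n × Fin n)) (by simp)
      (f := fun p => g p.1 * g p.2),
    Finset.prod_filter, Fintype.prod_prod_type]
  simp_rw [hsplit, Finset.prod_mul_distrib]
  rw [Finset.prod_comm (f := fun i j => if i ≤ j then g j else 1)]
  simp_rw [← Finset.prod_filter, Finset.filter_le_eq_Ici, Finset.filter_ge_eq_Iic,
    Finset.prod_const, Fin.card_Ici, Fin.card_Iic]
  rw [← Finset.prod_mul_distrib, ← Finset.prod_pow]
  refine Finset.prod_congr rfl fun i _ => ?_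
  rw [← pow_add, show n - i + (i + 1) = n + 1 by omega]

def diagSym (d : Fin n → ℝ) : SymMat n := ⟨diagonal d, isSymm_diagonal d⟩

lemma det_Pmap_diagSym (d : Fin n → ℝ) :
    LinearMap.det (Pmap (diagSym d)) = (∏ i, d i) ^ (n + 1) := by
  have hconj : (symCoords n).toLinearMap ∘ₗ Pmap (diagSym d) ∘ₗ (symCoords n).symm.toLinearMap =
      Matrix.toLin' (diagonal fun p : UpperPairs n => d p.1.1 * d p.1.2) := by
    refine LinearMap.ext fun f => funext fun p => ?_
    simp only [diagSym, LinearMap.coe_comp, LinearEquiv.coe_coe, Function.comp_apply,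
      symCoords_apply, coe_Pmap_apply, mul_diagonal, diagonal_mul, symCoords_symm_apply_of_le,
      toLin'_apply, mulVec_diagonal]
    ring
  rw [← LinearMap.det_conj _ (symCoords n), hconj, LinearMap.det_toLin', det_diagonal,
    Fin.prod_upperPairs_mul]

lemma det_Pmap (σ : SymMat n) : LinearMap.det (Pmap σ) = (σ : Mat n).det ^ (n + 1) := by
  have hA : (σ : Mat n).IsHermitian := isHermitian_iff_isSymm.2 (symMat_isSymm σ)
  set U : Mat n := (hA.eigenvectorUnitary : Mat n)
  have hU : U * Uᵀ = 1 := by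
    simpa [U, star_eq_conjTranspose] using Unitary.coe_mul_star_self hA.eigenvectorUnitary
  have hσ : σ = congrHom n U (diagSym hA.eigenvalues) := by
    apply Subtype.ext
    simpa [U, diagSym, star_eq_conjTranspose] using hA.spectral_theorem
  conv_lhs => rw [hσ]
  rw [det_Pmap_congrHom_of_mul_transpose hU, det_Pmap_diagSym, hA.det_eq_prod_eigenvalues]
  simp

lemma det_Pmap_sub_smul_tensMap {σ : SymMat n} (hσ : IsUnit (σ : Mat n).det) (c : ℝ) :
    LinearMap.det (Pmap σ - c • tensMap σ) = (σ : Mat n).det ^ (n + 1) * (1 - c * n) := by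
  rw [Pmap_sub_smul_tensMap_eq_mul hσ, map_mul, LinearMap.det_one_add_smulRight, det_Pmap,
    LinearMap.smul_apply, traceForm_symInv hσ]
  ring

end

theorem stmt_12_general (n : ℕ) (σ : SymMat n) (hσ : (σ : Mat n).PosDef) (c : ℝ) :
    LinearMap.det (Pmap σ - c • tensMap σ : Module.End ℝ (SymMat n)) =
        (σ : Mat n).det ^ (n + 1) * (1 - c * n) ∧
      LinearMap.det (Pmap σ : Module.End ℝ (SymMat n)) = (σ : Mat n).det ^ (n + 1) :=
  ⟨det_Pmap_sub_smul_tensMap ((isUnit_iff_isUnit_det _).1 hσ.isUnit) c, det_Pmap σ⟩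

/-- Lemma 3.2, part 3: `det (P(σ) - c σ ⊗ σ) = (det σ)^{n+1} (1 - c n)`; in particular
`det P(σ) = (det σ)^{n+1}`. -/
theorem stmt_12 (n : ℕ) (hn : 1 ≤ n) (σ : SymMat n) (hσ : (σ : Mat n).PosDef) (c : ℝ) :
    LinearMap.det (Pmap σ - c • tensMap σ : Module.End ℝ (SymMat n)) =
        (σ : Mat n).det ^ (n + 1) * (1 - c * n) ∧
      LinearMap.det (Pmap σ : Module.End ℝ (SymMat n)) = (σ : Mat n).det ^ (n + 1) :=
  stmt_12_general n σ hσ c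

end
end

section
/- Let n ≥ 1, p₁ > (n+3)/2 and σ₁ ∈ E₊, and set A₁ = p₁ − (n+1)/2 (so A₁ > 1). Then for every u₀ in the boundary of the cone E₊ (i.e. u₀ symmetric positive semidefinite and singular), the function u ↦ (−σ₁⁻¹ + A₁ u⁻¹) · e^{−tr(σ₁⁻¹u)} (det u)^{A₁}, defined on E₊ and valued in E, tends to 0 (in Frobenius norm) as u → u₀ within E₊. -/
open MeasureTheory Matrix Real

noncomputable section

/-- The matrix-valued integrand `(-σ₁⁻¹ + A₁ u⁻¹) e^{-tr(σ₁⁻¹ u)} (det u)^{A₁}`,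
with `A₁ = p₁ - (n+1)/2`. -/
def bTerm (n : ℕ) (p₁ : ℝ) (σ₁ u : Mat n) : Mat n :=
  (Real.exp (-(σ₁⁻¹ * u).trace) * u.det ^ (p₁ - ((n : ℝ) + 1) / 2)) •
    (-σ₁⁻¹ + (p₁ - ((n : ℝ) + 1) / 2) • u⁻¹)

/-!
On invertible `u`, `(det u)^A₁ • u⁻¹ = (det u)^(A₁-1) • adj u`, and the adjugate is polynomial,
hence continuous up to the boundary. So `bTerm` is a continuous expression in `u`, `(det u)^A₁`
and `(det u)^(A₁-1)`; as `A₁ > 1`, both powers tend to `0` when `det u → det u₀ = 0`.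
-/

open Filter Topology

namespace Matrix

variable {ι : Type*} [Fintype ι] [DecidableEq ι]

theorem rpow_det_smul_inv (a : ℝ) {u : Matrix ι ι ℝ} (hu : u.det ≠ 0) :
    u.det ^ a • u⁻¹ = u.det ^ (a - 1) • u.adjugate := by
  rw [inv_def, Ring.inverse_eq_inv, smul_smul, Real.rpow_sub_one hu, div_eq_mul_inv]

theorem tendsto_rpow_det_of_det_eq_zero {u₀ : Matrix ι ι ℝ} (hdet : u₀.det = 0) {c : ℝ}
    (hc : 0 < c) : Tendsto (fun u : Matrix ι ι ℝ => u.det ^ c) (𝓝 u₀) (𝓝 0) := by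
  have := (continuous_id.matrix_det.tendsto u₀).rpow_const (p := c) (Or.inr hc.le)
  simpa [hdet, Real.zero_rpow hc.ne'] using this

theorem tendsto_exp_mul_rpow_det_smul_add_inv {s c : Matrix ι ι ℝ} {a : ℝ} (b : ℝ) (ha : 1 < a)
    {u₀ : Matrix ι ι ℝ} (hdet : u₀.det = 0) :
    Tendsto (fun u : Matrix ι ι ℝ => (Real.exp (-(s * u).trace) * u.det ^ a) • (c + b • u⁻¹))
      (𝓝[{u | u.det ≠ 0}] u₀) (𝓝 0) := by
  have hregular :
      (fun u : Matrix ι ι ℝ => (Real.exp (-(s * u).trace) * u.det ^ a) • (c + b • u⁻¹))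
        =ᶠ[𝓝[{u | u.det ≠ 0}] u₀] fun u =>
          Real.exp (-(s * u).trace) • (u.det ^ a • c + b • u.det ^ (a - 1) • u.adjugate) := by
    filter_upwards [self_mem_nhdsWithin] with u hu
    rw [mul_smul, smul_add, smul_comm _ b, rpow_det_smul_inv a hu]
  have hexp : Continuous fun u : Matrix ι ι ℝ => Real.exp (-(s * u).trace) := by fun_prop
  have hlim := (hexp.tendsto u₀).smul
    (((tendsto_rpow_det_of_det_eq_zero hdet (c := a) (by linarith)).smul_const c).add
      (((tendsto_rpow_det_of_det_eq_zero hdet (c := a - 1) (by linarith)).smul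
        (continuous_id.matrix_adjugate.tendsto u₀)).const_smul b))
  simp only [zero_smul, smul_zero, add_zero] at hlim
  exact (hlim.mono_left nhdsWithin_le_nhds).congr' hregular.symm

theorem tendsto_sqrt_trace_transpose_mul_self {α : Type*} {l : Filter α}
    {f : α → Matrix ι ι ℝ} (hf : Tendsto f l (𝓝 0)) :
    Tendsto (fun x => √((f x)ᵀ * f x).trace) l (𝓝 0) := by
  have hcont : Continuous fun A : Matrix ι ι ℝ => √(Aᵀ * A).trace := by fun_prop
  simpa [Function.comp_def] using (hcont.tendsto 0).comp hf

end Matrix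

theorem stmt_18_general (n : ℕ) (p₁ : ℝ) (hp₁ : p₁ > ((n : ℝ) + 3) / 2)
    (σ₁ : Mat n) (u₀ : Mat n) (hdet : u₀.det = 0) :
    Filter.Tendsto
      (fun u : Mat n => Real.sqrt (((bTerm n p₁ σ₁ u)ᵀ * bTerm n p₁ σ₁ u).trace))
      (nhdsWithin u₀ {u : Mat n | u.PosDef}) (nhds 0) := by
  have hA : 1 < p₁ - ((n : ℝ) + 1) / 2 := by linarith
  have hsub : {u : Mat n | u.PosDef} ⊆ {u | u.det ≠ 0} := fun u hu => hu.det_pos.ne'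
  exact Matrix.tendsto_sqrt_trace_transpose_mul_self
    ((Matrix.tendsto_exp_mul_rpow_det_smul_add_inv _ hA hdet).mono_left (nhdsWithin_mono _ hsub))

/-- The boundary vanishing needed for the Stokes argument: as `u` tends to a boundary point
`u₀` of the cone within `E₊`, the `E`-valued function
`u ↦ (-σ₁⁻¹ + A₁ u⁻¹) e^{-tr(σ₁⁻¹ u)} (det u)^{A₁}` tends to `0` in Frobenius norm
`‖A‖ = (tr (Aᵀ A))^{1/2}`. -/
theorem stmt_18 (n : ℕ) (hn : 1 ≤ n) (p₁ : ℝ) (hp₁ : p₁ > ((n : ℝ) + 3) / 2)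
    (σ₁ : Mat n) (hσ₁ : σ₁.PosDef) (u₀ : Mat n) (h₀ : u₀.PosSemidef) (hdet : u₀.det = 0) :
    Filter.Tendsto
      (fun u : Mat n => Real.sqrt (((bTerm n p₁ σ₁ u)ᵀ * bTerm n p₁ σ₁ u).trace))
      (nhdsWithin u₀ {u : Mat n | u.PosDef}) (nhds 0) :=
  stmt_18_general n p₁ hp₁ σ₁ u₀ hdet

end
end
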